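/- arXiv:1501.05239 — 5 statements merged into one kernel-verified Lean document; each statement's English description precedes it below -/
import Mathlib

section
/- For any m×n matrix A over a field of rank r, there exists a unique m×n matrix R with exactly r nonzero entries, all equal to 1, at most one per row and at most one per column, such that for all 1 ≤ i ≤ m and 1 ≤ j ≤ n, the rank of the leading i×j submatrix of R equals the rank of the leading i×j submatrix of A. (R is called the rank profile matrix of A.) -/
/-!
Write `ρ i j` (`blockRank A i j`) for the rank of the block of `A` formed by its first `i` rows
and `j` columns. Adding row `i` raises `ρ i j` by `0` or `1`, and by rank–nullity for the
projection forgetting column `j` this increment is nondecreasing in `j`; the same holds with rows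
and columns swapped. Hence the mixed second difference
`ρ (i+1) (j+1) - ρ (i+1) j - ρ i (j+1) + ρ i j` is `0` or `1`, and equals `1` at most once in
each row and in each column: it is the indicator of a sub-permutation matrix `R`. The rank of a
leading block of a sub-permutation matrix is the number of its nonzero entries, whose mixed
second difference is the indicator of the support; a function of `(i, j)` vanishing for `i = 0`
and for `j = 0` is determined by its mixed second differences, so `R` has the leading ranks of
`A`. Conversely, any sub-permutation matrix with the leading ranks of `A` has the same mixed
second differences of leading ranks, hence the same support as `R`.
-/

open Matrix

/-- The leading `i×j` submatrix of a matrix. -/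
def leadSub {K : Type*} [Field K] {m n : ℕ} (A : Matrix (Fin m) (Fin n) K) {i j : ℕ}
    (hi : i ≤ m) (hj : j ≤ n) : Matrix (Fin i) (Fin j) K :=
  A.submatrix (Fin.castLE hi) (Fin.castLE hj)

/-- An `r`-sub-permutation matrix: rank `r` with exactly `r` nonzero entries, all equal to 1. -/
def IsSubPerm {K : Type*} [Field K] {m n : ℕ} (r : ℕ) (R : Matrix (Fin m) (Fin n) K) : Prop :=
  (∀ i j, R i j = 0 ∨ R i j = 1) ∧
  {p : Fin m × Fin n | R p.1 p.2 ≠ 0}.ncard = r ∧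
  R.rank = r

/-- `R` is the rank profile matrix of `A`: the rank(A)-sub-permutation matrix each of whose
leading submatrices has the same rank as the corresponding leading submatrix of `A`. -/
def IsRPM {K : Type*} [Field K] {m n : ℕ} (A R : Matrix (Fin m) (Fin n) K) : Prop :=
  IsSubPerm A.rank R ∧
  ∀ (i j : ℕ) (hi : i ≤ m) (hj : j ≤ n),
    (leadSub R hi hj).rank = (leadSub A hi hj).rank

/-- `S` is the row rank profile of `A`: the lexicographically smallest set of
`rank A` indices of linearly independent rows of `A`. -/
def IsRowRP {K : Type*} [Field K] {m n : ℕ} (A : Matrix (Fin m) (Fin n) K)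
    (S : Finset (Fin m)) : Prop :=
  S.card = A.rank ∧ LinearIndependent K (fun i : S => A i) ∧
  ∀ T : Finset (Fin m), T.card = A.rank → LinearIndependent K (fun i : T => A i) →
    S = T ∨ List.Lex (· < ·) (S.sort (· ≤ ·)) (T.sort (· ≤ ·))

open Classical in
/-- Row support: the set of indices of nonzero rows. -/
noncomputable def rowSupp {K : Type*} [Field K] {m n : ℕ}
    (R : Matrix (Fin m) (Fin n) K) : Finset (Fin m) :=
  Finset.univ.filter fun i => ∃ j, R i j ≠ 0

/-- The m×n block matrix [[I_r, 0], [0, 0]]. -/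
def Jb (K : Type*) [Field K] (m n r : ℕ) : Matrix (Fin m) (Fin n) K :=
  Matrix.of fun i j => if (i : ℕ) = (j : ℕ) ∧ (i : ℕ) < r then 1 else 0

/-- The pivoting matrix `Π_{P,Q} = P [[I_r,0],[0,0]] Q` of a PLUQ decomposition of rank r. -/
noncomputable def PivMat (K : Type*) [Field K] {m n : ℕ}
    (σ : Equiv.Perm (Fin m)) (τ : Equiv.Perm (Fin n)) (r : ℕ) : Matrix (Fin m) (Fin n) K :=
  σ.permMatrix K * Jb K m n r * τ.permMatrix K

/-- A permutation of `Fin n` is `k`-monotonically increasing if its last `n-k`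
values form a strictly increasing sequence. -/
def MonoInc {n : ℕ} (k : ℕ) (σ : Equiv.Perm (Fin n)) : Prop :=
  ∀ a b : Fin n, k ≤ (a : ℕ) → a < b → σ a < σ b

section LinearAlgebra

open Module Submodule

variable {K V W : Type*} [Field K] [AddCommGroup V] [Module K V] [AddCommGroup W] [Module K W]

theorem Submodule.finrank_add_finrank_map_le [FiniteDimensional K V] (f : V →ₗ[K] W)
    {p q : Submodule K V} (hpq : p ≤ q) :
    finrank K p + finrank K (q.map f) ≤ finrank K q + finrank K (p.map f) := by
  have hp := LinearMap.finrank_range_add_finrank_ker (f.domRestrict p)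
  have hq := LinearMap.finrank_range_add_finrank_ker (f.domRestrict q)
  rw [LinearMap.range_domRestrict] at hp hq
  have hker : finrank K (LinearMap.ker (f.domRestrict p)) ≤
      finrank K (LinearMap.ker (f.domRestrict q)) := by
    refine LinearMap.finrank_le_finrank_of_injective
      (f := (inclusion hpq).restrict fun x hx => by simpa using hx) fun x y h => ?_
    exact Subtype.ext (inclusion_injective hpq (congrArg Subtype.val h))
  omega

theorem Submodule.finrank_map_span_insert_le [FiniteDimensional K W] (f : V →ₗ[K] W) (v : V)
    (s : Set V) : finrank K ((span K (insert v s)).map f) ≤ finrank K ((span K s).map f) + 1 := by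
  rw [span_insert, map_sup, map_span, Set.image_singleton, sup_comm]
  have hv : finrank K (span K {f v}) ≤ 1 := by
    simpa using finrank_span_le_card (R := K) ({f v} : Set W)
  have := finrank_add_le_finrank_add_finrank ((span K s).map f) (span K {f v})
  omega

theorem Matrix.rank_eq_ncard_of_subperm {ι κ : Type*} [Fintype ι] [Fintype κ]
    (M : Matrix ι κ K) (hrow : ∀ i j j', M i j ≠ 0 → M i j' ≠ 0 → j = j')
    (hcol : ∀ i i' j, M i j ≠ 0 → M i' j ≠ 0 → i = i') :
    M.rank = {p : ι × κ | M p.1 p.2 ≠ 0}.ncard := by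
  classical
  set s := {p : ι × κ | M p.1 p.2 ≠ 0}
  have hsingle (p : s) : M.row p.1.1 = Pi.single p.1.2 (M p.1.1 p.1.2) := by
    ext b
    by_cases hb : b = p.1.2
    · subst hb
      simp [Matrix.row]
    · rw [Pi.single_eq_of_ne hb]
      by_contra h
      exact hb (hrow _ _ _ h p.2)
  have hli : LinearIndependent K fun p : s => M.row p.1.1 := by
    have hinj : Function.Injective fun p : s => p.1.2 := fun p q (h : p.1.2 = q.1.2) =>
      Subtype.ext (Prod.ext (hcol _ _ _ p.2 (by rw [h]; exact q.2)) h)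
    convert ((Pi.basisFun K κ).linearIndependent.comp _ hinj).units_smul
      (fun p => Units.mk0 _ p.2) using 1
    ext p b
    rw [hsingle p]
    simp [Pi.single_apply]
  have hspan : span K (Set.range fun p : s => M.row p.1.1) = span K (Set.range M.row) := by
    refine le_antisymm (span_mono (Set.range_subset_iff.2 fun p => ⟨_, rfl⟩)) (span_le.2 ?_)
    rintro _ ⟨a, rfl⟩
    by_cases h : M.row a = 0
    · simp [h]
    · obtain ⟨b, hb⟩ := Function.ne_iff.1 h
      exact subset_span ⟨⟨(a, b), hb⟩, rfl⟩
  rw [rank_eq_finrank_span_row, ← hspan, finrank_span_eq_card hli, Fintype.card_eq_nat_card,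
    Nat.card_coe_set_eq]

end LinearAlgebra

section MixedDifference

open Finset

def mixedDiff (g : ℕ → ℕ → ℕ) (a b : ℕ) : ℤ :=
  g (a + 1) (b + 1) - g (a + 1) b - g a (b + 1) + g a b

theorem mixedDiff_doubleSum (f : ℕ → ℕ → ℕ) (a b : ℕ) :
    mixedDiff (fun i j => ∑ x ∈ range i, ∑ y ∈ range j, f x y) a b = f a b := by
  simp only [mixedDiff, sum_range_succ]
  push_cast
  ring

theorem doubleSum_mixedDiff {g : ℕ → ℕ → ℕ} (hg₁ : ∀ j, g 0 j = 0) (hg₂ : ∀ i, g i 0 = 0)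
    (i j : ℕ) : ∑ a ∈ range i, ∑ b ∈ range j, mixedDiff g a b = g i j := by
  induction i with
  | zero => simp [hg₁]
  | succ i ih =>
    have hrow : ∑ b ∈ range j, mixedDiff g i b =
        ((g (i + 1) j : ℤ) - g i j) - ((g (i + 1) 0 : ℤ) - g i 0) := by
      rw [← sum_range_sub fun b => (g (i + 1) b : ℤ) - g i b]
      exact sum_congr rfl fun b _ => by simp only [mixedDiff]; ring
    rw [sum_range_succ, ih, hrow, hg₂, hg₂]
    ring

theorem eq_of_mixedDiff_eq {g h : ℕ → ℕ → ℕ} (hg₁ : ∀ j, g 0 j = 0) (hg₂ : ∀ i, g i 0 = 0)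
    (hh₁ : ∀ j, h 0 j = 0) (hh₂ : ∀ i, h i 0 = 0) {m n : ℕ}
    (hgh : ∀ a < m, ∀ b < n, mixedDiff g a b = mixedDiff h a b)
    {i j : ℕ} (hi : i ≤ m) (hj : j ≤ n) : g i j = h i j := by
  have key : (g i j : ℤ) = h i j := by
    rw [← doubleSum_mixedDiff hg₁ hg₂, ← doubleSum_mixedDiff hh₁ hh₂]
    exact sum_congr rfl fun a ha => sum_congr rfl fun b hb =>
      hgh a ((mem_range.1 ha).trans_le hi) b ((mem_range.1 hb).trans_le hj)
  exact_mod_cast key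

theorem eq_of_jump_eq_one {φ : ℕ → ℤ} (hφ : Monotone φ) (h₀ : ∀ b, 0 ≤ φ b)
    (h₁ : ∀ b, φ b ≤ 1) {b b' : ℕ} (hb : φ (b + 1) - φ b = 1) (hb' : φ (b' + 1) - φ b' = 1) :
    b = b' := by
  by_contra hne
  rcases Nat.lt_or_gt_of_ne hne with h | h
  · linarith [hφ (Nat.succ_le_of_lt h), h₀ b, h₁ (b' + 1)]
  · linarith [hφ (Nat.succ_le_of_lt h), h₀ b', h₁ (b + 1)]

end MixedDifference

section LeadingBlocks

open Module Submodule

variable {K : Type*} [Field K] {m n : ℕ}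

noncomputable def blockRank (A : Matrix (Fin m) (Fin n) K) (i j : ℕ) : ℕ :=
  (A.submatrix (Subtype.val : {a : Fin m // (a : ℕ) < i} → Fin m)
    (Subtype.val : {b : Fin n // (b : ℕ) < j} → Fin n)).rank

theorem rank_leadSub_eq_blockRank (A : Matrix (Fin m) (Fin n) K) {i j : ℕ} (hi : i ≤ m)
    (hj : j ≤ n) : (leadSub A hi hj).rank = blockRank A i j := by
  rw [blockRank, ← rank_submatrix _ (Fin.castLEquiv hi) (Fin.castLEquiv hj)]
  rfl

theorem blockRank_transpose (A : Matrix (Fin m) (Fin n) K) (i j : ℕ) :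
    blockRank Aᵀ j i = blockRank A i j := by
  rw [blockRank, blockRank, ← transpose_submatrix, rank_transpose]

def leadingRowSpan (A : Matrix (Fin m) (Fin n) K) (i : ℕ) : Submodule K (Fin n → K) :=
  span K (A.row '' {a | (a : ℕ) < i})

theorem leadingRowSpan_mono (A : Matrix (Fin m) (Fin n) K) {i i' : ℕ} (h : i ≤ i') :
    leadingRowSpan A i ≤ leadingRowSpan A i' :=
  span_mono <| Set.image_mono fun a (ha : (a : ℕ) < i) => show (a : ℕ) < i' from ha.trans_le h

variable (K) in
def restrictCols (n j : ℕ) : (Fin n → K) →ₗ[K] ({b : Fin n // (b : ℕ) < j} → K) :=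
  LinearMap.funLeft K K Subtype.val

theorem restrictCols_of_le {j j' : ℕ} (hj : j ≤ j') :
    restrictCols K n j = (LinearMap.funLeft K K fun b : {b : Fin n // (b : ℕ) < j} =>
      (⟨b.1, b.2.trans_le hj⟩ : {b : Fin n // (b : ℕ) < j'})) ∘ₗ restrictCols K n j' :=
  rfl

theorem blockRank_eq_finrank (A : Matrix (Fin m) (Fin n) K) (i j : ℕ) :
    blockRank A i j = finrank K ((leadingRowSpan A i).map (restrictCols K n j)) := by
  rw [blockRank, rank_eq_finrank_span_row, leadingRowSpan, map_span, Set.image_image,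
    Set.image_eq_range]
  rfl

theorem blockRank_eq_finrank_map_map (A : Matrix (Fin m) (Fin n) K) (i : ℕ) {j j' : ℕ}
    (hj : j ≤ j') : blockRank A i j = finrank K
      (((leadingRowSpan A i).map (restrictCols K n j')).map
        (LinearMap.funLeft K K fun b : {b : Fin n // (b : ℕ) < j} =>
          (⟨b.1, b.2.trans_le hj⟩ : {b : Fin n // (b : ℕ) < j'}))) := by
  rw [blockRank_eq_finrank, restrictCols_of_le hj, map_comp]

theorem blockRank_zero_left (A : Matrix (Fin m) (Fin n) K) (j : ℕ) : blockRank A 0 j = 0 := by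
  have hrows : {a : Fin m | (a : ℕ) < 0} = ∅ :=
    Set.eq_empty_of_forall_notMem fun a => Nat.not_lt_zero a
  rw [blockRank_eq_finrank, leadingRowSpan, hrows]
  simp

theorem blockRank_zero_right (A : Matrix (Fin m) (Fin n) K) (i : ℕ) : blockRank A i 0 = 0 := by
  rw [← blockRank_transpose, blockRank_zero_left]

theorem blockRank_mono (A : Matrix (Fin m) (Fin n) K) {i i' j j' : ℕ} (hi : i ≤ i')
    (hj : j ≤ j') : blockRank A i j ≤ blockRank A i' j' := by
  rw [blockRank_eq_finrank_map_map A i hj, blockRank_eq_finrank]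
  exact (finrank_map_le _ _).trans (finrank_mono (map_mono (leadingRowSpan_mono A hi)))

theorem blockRank_succ_left_le (A : Matrix (Fin m) (Fin n) K) (i j : ℕ) :
    blockRank A (i + 1) j ≤ blockRank A i j + 1 := by
  rw [blockRank_eq_finrank, blockRank_eq_finrank, leadingRowSpan, leadingRowSpan]
  rcases lt_or_ge i m with hi | hi
  · have hrows : A.row '' {a : Fin m | (a : ℕ) < i + 1} =
        insert (A.row ⟨i, hi⟩) (A.row '' {a : Fin m | (a : ℕ) < i}) := by
      rw [← Set.image_insert_eq]
      congr 1
      ext a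
      simp only [Set.mem_ofPred_eq, Set.mem_insert_iff, Fin.ext_iff]
      omega
    rw [hrows]
    exact finrank_map_span_insert_le _ _ _
  · have hrows : {a : Fin m | (a : ℕ) < i + 1} = {a : Fin m | (a : ℕ) < i} := by
      ext a
      simp only [Set.mem_ofPred_eq]
      omega
    rw [hrows]
    omega

theorem blockRank_add_blockRank_le (A : Matrix (Fin m) (Fin n) K) {i i' j j' : ℕ} (hi : i ≤ i')
    (hj : j ≤ j') : blockRank A i' j + blockRank A i j' ≤ blockRank A i' j' + blockRank A i j := by
  rw [blockRank_eq_finrank_map_map A i hj, blockRank_eq_finrank_map_map A i' hj,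
    blockRank_eq_finrank A i, blockRank_eq_finrank A i']
  have := finrank_add_finrank_map_le
    (LinearMap.funLeft K K fun b : {b : Fin n // (b : ℕ) < j} =>
      (⟨b.1, b.2.trans_le hj⟩ : {b : Fin n // (b : ℕ) < j'}))
    (map_mono (f := restrictCols K n j') (leadingRowSpan_mono A hi))
  omega

end LeadingBlocks

section RankProfile

open Finset

variable {K : Type*} [Field K] {m n : ℕ}

theorem mixedDiff_blockRank_nonneg (A : Matrix (Fin m) (Fin n) K) (a b : ℕ) :
    0 ≤ mixedDiff (blockRank A) a b := by
  have := blockRank_add_blockRank_le A (Nat.le_add_right a 1) (Nat.le_add_right b 1)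
  simp only [mixedDiff]
  omega

theorem mixedDiff_blockRank_le_one (A : Matrix (Fin m) (Fin n) K) (a b : ℕ) :
    mixedDiff (blockRank A) a b ≤ 1 := by
  have h₁ := blockRank_succ_left_le A a (b + 1)
  have h₂ := blockRank_mono A (Nat.le_add_right a 1) (le_refl b)
  simp only [mixedDiff]
  omega

theorem mixedDiff_blockRank_transpose (A : Matrix (Fin m) (Fin n) K) (a b : ℕ) :
    mixedDiff (blockRank Aᵀ) b a = mixedDiff (blockRank A) a b := by
  simp only [mixedDiff, blockRank_transpose]
  ring

theorem eq_of_mixedDiff_blockRank_eq_one_right (A : Matrix (Fin m) (Fin n) K) {a b b' : ℕ}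
    (hb : mixedDiff (blockRank A) a b = 1) (hb' : mixedDiff (blockRank A) a b' = 1) :
    b = b' := by
  let φ : ℕ → ℤ := fun j => (blockRank A (a + 1) j : ℤ) - blockRank A a j
  have hφ : Monotone φ := monotone_nat_of_le_succ fun j => by
    have := blockRank_add_blockRank_le A (Nat.le_add_right a 1) (Nat.le_add_right j 1)
    simp only [φ]
    omega
  refine eq_of_jump_eq_one hφ (fun j => ?_) (fun j => ?_) ?_ ?_
  · have := blockRank_mono A (Nat.le_add_right a 1) (le_refl j)
    simp only [φ]
    omega
  · have := blockRank_succ_left_le A a j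
    simp only [φ]
    omega
  · simp only [φ, mixedDiff] at hb ⊢
    omega
  · simp only [φ, mixedDiff] at hb' ⊢
    omega

theorem eq_of_mixedDiff_blockRank_eq_one_left (A : Matrix (Fin m) (Fin n) K) {a a' b : ℕ}
    (ha : mixedDiff (blockRank A) a b = 1) (ha' : mixedDiff (blockRank A) a' b = 1) :
    a = a' :=
  eq_of_mixedDiff_blockRank_eq_one_right Aᵀ (by rwa [mixedDiff_blockRank_transpose])
    (by rwa [mixedDiff_blockRank_transpose])

noncomputable def rankProfile (A : Matrix (Fin m) (Fin n) K) : Matrix (Fin m) (Fin n) K :=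
  Matrix.of fun a b => if mixedDiff (blockRank A) a b = 1 then 1 else 0

theorem rankProfile_ne_zero_iff (A : Matrix (Fin m) (Fin n) K) (a : Fin m) (b : Fin n) :
    rankProfile A a b ≠ 0 ↔ mixedDiff (blockRank A) a b = 1 := by
  by_cases h : mixedDiff (blockRank A) a b = 1 <;> simp [rankProfile, h]

theorem rankProfile_eq_zero_or_one (A : Matrix (Fin m) (Fin n) K) (a : Fin m) (b : Fin n) :
    rankProfile A a b = 0 ∨ rankProfile A a b = 1 := by
  by_cases h : mixedDiff (blockRank A) a b = 1 <;> simp [rankProfile, h]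

theorem rankProfile_row_unique (A : Matrix (Fin m) (Fin n) K) (a : Fin m) (b b' : Fin n)
    (hb : rankProfile A a b ≠ 0) (hb' : rankProfile A a b' ≠ 0) : b = b' :=
  Fin.ext <| eq_of_mixedDiff_blockRank_eq_one_right A ((rankProfile_ne_zero_iff A a b).1 hb)
    ((rankProfile_ne_zero_iff A a b').1 hb')

theorem rankProfile_col_unique (A : Matrix (Fin m) (Fin n) K) (a a' : Fin m) (b : Fin n)
    (ha : rankProfile A a b ≠ 0) (ha' : rankProfile A a' b ≠ 0) : a = a' :=
  Fin.ext <| eq_of_mixedDiff_blockRank_eq_one_left A ((rankProfile_ne_zero_iff A a b).1 ha)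
    ((rankProfile_ne_zero_iff A a' b).1 ha')

open Classical in
noncomputable def supportInd (M : Matrix (Fin m) (Fin n) K) (a b : ℕ) : ℕ :=
  if h : a < m ∧ b < n then if M ⟨a, h.1⟩ ⟨b, h.2⟩ = 0 then 0 else 1 else 0

theorem supportInd_eq_zero_iff (M : Matrix (Fin m) (Fin n) K) (a : Fin m) (b : Fin n) :
    supportInd M a b = 0 ↔ M a b = 0 := by
  by_cases h : M a b = 0 <;> simp [supportInd, h]

theorem supportInd_rankProfile (A : Matrix (Fin m) (Fin n) K) {a b : ℕ} (ha : a < m)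
    (hb : b < n) : (supportInd (rankProfile A) a b : ℤ) = mixedDiff (blockRank A) a b := by
  have h₀ := mixedDiff_blockRank_nonneg A a b
  have h₁ := mixedDiff_blockRank_le_one A a b
  rw [supportInd, dif_pos ⟨ha, hb⟩]
  by_cases h : mixedDiff (blockRank A) a b = 1
  · simp [rankProfile, h]
  · simp only [rankProfile, of_apply, h, if_false, if_true]
    omega

noncomputable def supportCount (M : Matrix (Fin m) (Fin n) K) (i j : ℕ) : ℕ :=
  ∑ a ∈ range i, ∑ b ∈ range j, supportInd M a b

theorem supportCount_zero_left (M : Matrix (Fin m) (Fin n) K) (j : ℕ) :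
    supportCount M 0 j = 0 := by
  simp [supportCount]

theorem supportCount_zero_right (M : Matrix (Fin m) (Fin n) K) (i : ℕ) :
    supportCount M i 0 = 0 := by
  simp [supportCount]

theorem mixedDiff_supportCount (M : Matrix (Fin m) (Fin n) K) (a b : ℕ) :
    mixedDiff (supportCount M) a b = supportInd M a b :=
  mixedDiff_doubleSum _ a b

theorem rank_leadSub_eq_supportCount (M : Matrix (Fin m) (Fin n) K)
    (hrow : ∀ i j j', M i j ≠ 0 → M i j' ≠ 0 → j = j')
    (hcol : ∀ i i' j, M i j ≠ 0 → M i' j ≠ 0 → i = i') {i j : ℕ} (hi : i ≤ m) (hj : j ≤ n) :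
    (leadSub M hi hj).rank = supportCount M i j := by
  classical
  rw [rank_eq_ncard_of_subperm (leadSub M hi hj)
    (fun a b b' h h' => Fin.castLE_injective hj (hrow _ _ _ h h'))
    (fun a a' b h h' => Fin.castLE_injective hi (hcol _ _ _ h h')),
    Set.ncard_eq_toFinset_card', Set.toFinset_ofPred, card_filter, Fintype.sum_prod_type,
    supportCount, ← Fin.sum_univ_eq_sum_range]
  refine sum_congr rfl fun a _ => ?_
  rw [← Fin.sum_univ_eq_sum_range]
  refine sum_congr rfl fun b _ => ?_
  rw [supportInd, dif_pos ⟨a.2.trans_le hi, b.2.trans_le hj⟩, ← ite_not]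
  exact if_congr not_not rfl rfl

theorem rank_leadSub_rankProfile (A : Matrix (Fin m) (Fin n) K) {i j : ℕ} (hi : i ≤ m)
    (hj : j ≤ n) : (leadSub (rankProfile A) hi hj).rank = (leadSub A hi hj).rank := by
  rw [rank_leadSub_eq_supportCount _ (rankProfile_row_unique A) (rankProfile_col_unique A),
    rank_leadSub_eq_blockRank]
  refine eq_of_mixedDiff_eq (supportCount_zero_left _) (supportCount_zero_right _)
    (blockRank_zero_left A) (blockRank_zero_right A) (fun a ha b hb => ?_) hi hj
  rw [mixedDiff_supportCount, supportInd_rankProfile A ha hb]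

theorem ncard_support_rankProfile (A : Matrix (Fin m) (Fin n) K) :
    {p : Fin m × Fin n | rankProfile A p.1 p.2 ≠ 0}.ncard = A.rank := by
  rw [← rank_eq_ncard_of_subperm _ (rankProfile_row_unique A) (rankProfile_col_unique A)]
  exact rank_leadSub_rankProfile A le_rfl le_rfl

theorem eq_rankProfile {A R : Matrix (Fin m) (Fin n) K} (h01 : ∀ i j, R i j = 0 ∨ R i j = 1)
    (hrow : ∀ i j j', R i j ≠ 0 → R i j' ≠ 0 → j = j')
    (hcol : ∀ i i' j, R i j ≠ 0 → R i' j ≠ 0 → i = i')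
    (hrank : ∀ (i j : ℕ) (hi : i ≤ m) (hj : j ≤ n),
      (leadSub R hi hj).rank = (leadSub A hi hj).rank) :
    R = rankProfile A := by
  have hcount {i j : ℕ} (hi : i ≤ m) (hj : j ≤ n) : supportCount R i j = blockRank A i j := by
    rw [← rank_leadSub_eq_supportCount R hrow hcol hi hj, hrank, rank_leadSub_eq_blockRank]
  ext a b
  have hsupp : (supportInd R a b : ℤ) = supportInd (rankProfile A) a b := by
    rw [← mixedDiff_supportCount, supportInd_rankProfile A a.2 b.2]
    simp only [mixedDiff, hcount (a.2 : (a : ℕ) + 1 ≤ m) (b.2 : (b : ℕ) + 1 ≤ n),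
      hcount a.2.le (b.2 : (b : ℕ) + 1 ≤ n), hcount (a.2 : (a : ℕ) + 1 ≤ m) b.2.le,
      hcount a.2.le b.2.le]
  have hzero : R a b = 0 ↔ rankProfile A a b = 0 := by
    rw [← supportInd_eq_zero_iff, ← supportInd_eq_zero_iff, Nat.cast_inj.1 hsupp]
  rcases h01 a b with h | h
  · rw [h, hzero.1 h]
  · have hne : rankProfile A a b ≠ 0 := fun h' => one_ne_zero (h ▸ hzero.2 h')
    rw [h, (rankProfile_eq_zero_or_one A a b).resolve_left hne]

end RankProfile

/-- existence and uniqueness of the rank profile matrix. -/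
theorem stmt0 {K : Type*} [Field K] {m n : ℕ} (A : Matrix (Fin m) (Fin n) K) :
    ∃! R : Matrix (Fin m) (Fin n) K,
      (∀ i j, R i j = 0 ∨ R i j = 1) ∧
      {p : Fin m × Fin n | R p.1 p.2 ≠ 0}.ncard = A.rank ∧
      (∀ i j j', R i j ≠ 0 → R i j' ≠ 0 → j = j') ∧
      (∀ i i' j, R i j ≠ 0 → R i' j ≠ 0 → i = i') ∧
      ∀ (i j : ℕ) (hi : i ≤ m) (hj : j ≤ n),
        (leadSub R hi hj).rank = (leadSub A hi hj).rank := by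
  refine ⟨rankProfile A, ⟨rankProfile_eq_zero_or_one A, ncard_support_rankProfile A,
    rankProfile_row_unique A, rankProfile_col_unique A,
    fun i j hi hj => rank_leadSub_rankProfile A hi hj⟩, ?_⟩
  rintro R ⟨h01, -, hrow, hcol, hrank⟩
  exact eq_rankProfile h01 hrow hcol hrank
end

section
/- If two rank profile matrices R1 and R2 satisfy that every leading submatrix of R1 and of R2 has the same rank as the corresponding leading submatrix of A, then R1 = R2. -/
open Matrix

/-! A matrix has as many nonzero entries as its rank exactly when no two of them share a row or
a column, and this property passes to submatrices. For a sub-permutation matrix `R` the rank of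
each leading block is therefore the number of nonzero entries of `R` in it, so the rank profile
condition fixes these counts. Inclusion–exclusion over the leading blocks with corners `(i, j)`,
`(i + 1, j)`, `(i, j + 1)`, `(i + 1, j + 1)` recovers whether `R i j` is nonzero. -/

open Finset

namespace Matrix

variable {m n m₀ n₀ K : Type*} [Fintype m] [Fintype n] [Field K]

open Classical in
noncomputable def entrySupport (M : Matrix m n K) : Finset (m × n) :=
  {p | M p.1 p.2 ≠ 0}

@[simp]
lemma mem_entrySupport {M : Matrix m n K} {p : m × n} :
    p ∈ M.entrySupport ↔ M p.1 p.2 ≠ 0 := by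
  simp [entrySupport]

lemma rank_le_card_image_fst_entrySupport [DecidableEq m] (M : Matrix m n K) :
    M.rank ≤ #(M.entrySupport.image Prod.fst) := by
  classical
  set rows := M.entrySupport.image Prod.fst
  have hM : diagonal (fun i => if i ∈ rows then (1 : K) else 0) * M = M := by
    ext i j
    by_cases hi : i ∈ rows
    · simp [diagonal_mul, hi]
    · have : M i j = 0 := by
        by_contra h
        exact hi (mem_image.mpr ⟨(i, j), mem_entrySupport.mpr h, rfl⟩)
      simp [diagonal_mul, hi, this]
  calc M.rank = (diagonal (fun i => if i ∈ rows then (1 : K) else 0) * M).rank := by rw [hM]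
    _ ≤ (diagonal (fun i => if i ∈ rows then (1 : K) else 0)).rank := rank_mul_le_left _ _
    _ = #rows := by
      rw [rank_diagonal, Fintype.card_subtype]
      congr 1
      ext i
      simp

lemma rank_le_card_image_snd_entrySupport [DecidableEq n] (M : Matrix m n K) :
    M.rank ≤ #(M.entrySupport.image Prod.snd) := by
  rw [← rank_transpose]
  convert rank_le_card_image_fst_entrySupport Mᵀ using 2
  ext j
  simp

lemma card_entrySupport_le_rank_of_injOn (M : Matrix m n K)
    (hfst : Set.InjOn Prod.fst (M.entrySupport : Set (m × n)))
    (hsnd : Set.InjOn Prod.snd (M.entrySupport : Set (m × n))) :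
    #M.entrySupport ≤ M.rank := by
  classical
  set s := M.entrySupport
  -- The support is a partial matching of rows and columns, so on it `M` is diagonal.
  have hdiag : M.submatrix (fun p : s => p.1.1) (fun p : s => p.1.2) =
      diagonal fun p : s => M p.1.1 p.1.2 := by
    ext p q
    by_cases hpq : p = q
    · simp [hpq]
    · rw [diagonal_apply_ne _ hpq, submatrix_apply]
      by_contra h
      have hp : ((p.1.1, q.1.2) : m × n) = p.1 := hfst (mem_entrySupport.mpr h) p.2 rfl
      exact hpq (Subtype.ext (hsnd p.2 q.2 (congrArg Prod.snd hp).symm))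
  calc #s = Fintype.card {p : s // M p.1.1 p.1.2 ≠ 0} := by
        rw [Fintype.card_subtype, filter_true_of_mem fun p _ => mem_entrySupport.mp p.2,
          card_univ, Fintype.card_coe]
    _ = (M.submatrix (fun p : s => p.1.1) (fun p : s => p.1.2)).rank := by
        rw [hdiag, rank_diagonal]
    _ ≤ M.rank := rank_submatrix_le _ _ _

theorem rank_eq_card_entrySupport_iff [DecidableEq m] [DecidableEq n] (M : Matrix m n K) :
    M.rank = #M.entrySupport ↔
      Set.InjOn Prod.fst (M.entrySupport : Set (m × n)) ∧
        Set.InjOn Prod.snd (M.entrySupport : Set (m × n)) := by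
  constructor
  · intro h
    refine ⟨card_image_iff.mp ?_, card_image_iff.mp ?_⟩
    · exact le_antisymm card_image_le (h ▸ M.rank_le_card_image_fst_entrySupport)
    · exact le_antisymm card_image_le (h ▸ M.rank_le_card_image_snd_entrySupport)
  · rintro ⟨hfst, hsnd⟩
    exact le_antisymm (M.rank_le_card_image_fst_entrySupport.trans card_image_le)
      (M.card_entrySupport_le_rank_of_injOn hfst hsnd)

theorem rank_submatrix_eq_card_entrySupport [Fintype m₀] [Fintype n₀] (M : Matrix m n K)
    (hM : M.rank = #M.entrySupport) {f : m₀ → m} {g : n₀ → n} (hf : f.Injective)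
    (hg : g.Injective) : (M.submatrix f g).rank = #(M.submatrix f g).entrySupport := by
  classical
  obtain ⟨hfst, hsnd⟩ := (rank_eq_card_entrySupport_iff M).mp hM
  have hmem {p : m₀ × n₀} (hp : p ∈ (M.submatrix f g).entrySupport) :
      (f p.1, g p.2) ∈ M.entrySupport := by simpa using hp
  refine (rank_eq_card_entrySupport_iff _).mpr ⟨fun p hp q hq h => ?_, fun p hp q hq h => ?_⟩
  · have := hfst (hmem hp) (hmem hq) (congrArg f h)
    exact Prod.ext h (hg (congrArg Prod.snd this))
  · have := hsnd (hmem hp) (hmem hq) (congrArg g h)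
    exact Prod.ext (hf (congrArg Prod.fst this)) h

lemma eq_of_entrySupport_eq {M N : Matrix m n K} (hM : ∀ i j, M i j = 0 ∨ M i j = 1)
    (hN : ∀ i j, N i j = 0 ∨ N i j = 1) (h : M.entrySupport = N.entrySupport) : M = N := by
  ext i j
  have hij : M i j ≠ 0 ↔ N i j ≠ 0 := by
    simpa using congrArg ((i, j) ∈ ·) h
  rcases hM i j with h0 | h1 <;> rcases hN i j with h0' | h1' <;> simp_all

end Matrix

def boxCard {m n : ℕ} (s : Finset (Fin m × Fin n)) (i j : ℕ) : ℕ :=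
  #{p ∈ s | (p.1 : ℕ) < i ∧ (p.2 : ℕ) < j}

lemma boxCard_succ_succ_add {m n : ℕ} (s : Finset (Fin m × Fin n)) (a : Fin m) (b : Fin n) :
    boxCard s (a + 1) (b + 1) + boxCard s a b =
      boxCard s a (b + 1) + boxCard s (a + 1) b + if (a, b) ∈ s then 1 else 0 := by
  rw [← sum_ite_eq' s (a, b) fun _ => 1]
  simp only [boxCard, card_filter, ← sum_add_distrib]
  refine sum_congr rfl fun p _ => ?_
  obtain ⟨⟨x, hx⟩, ⟨y, hy⟩⟩ := p
  simp only [Prod.mk.injEq, Fin.ext_iff]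
  split_ifs <;> omega

lemma eq_of_boxCard_eq {m n : ℕ} {s t : Finset (Fin m × Fin n)}
    (h : ∀ i j, i ≤ m → j ≤ n → boxCard s i j = boxCard t i j) : s = t := by
  ext ⟨a, b⟩
  have hs := boxCard_succ_succ_add s a b
  have ht := boxCard_succ_succ_add t a b
  rw [h (a + 1) (b + 1) a.isLt b.isLt, h a b a.isLt.le b.isLt.le, h a (b + 1) a.isLt.le b.isLt,
    h (a + 1) b a.isLt b.isLt.le] at hs
  have : (if (a, b) ∈ s then 1 else 0) = if (a, b) ∈ t then 1 else 0 := by omega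
  split_ifs at this <;> tauto

section SubPerm

variable {K : Type*} [Field K] {m n r : ℕ} {R : Matrix (Fin m) (Fin n) K}

lemma IsSubPerm.rank_eq_card_entrySupport (hR : IsSubPerm r R) :
    R.rank = #R.entrySupport := by
  obtain ⟨-, hcard, hrank⟩ := hR
  rw [hrank, ← hcard, ← Set.ncard_coe_finset]
  congr 1
  ext p
  simp

lemma card_entrySupport_leadSub {i j : ℕ} (hi : i ≤ m) (hj : j ≤ n) :
    #(leadSub R hi hj).entrySupport = boxCard R.entrySupport i j := by
  rw [boxCard, ← card_map ((Fin.castLEEmb hi).prodMap (Fin.castLEEmb hj))]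
  congr 1
  ext ⟨a, b⟩
  simp only [mem_map, mem_filter, Matrix.mem_entrySupport, Prod.exists,
    Function.Embedding.coe_prodMap, Prod.map_apply, Fin.coe_castLEEmb, Prod.mk.injEq]
  constructor
  · rintro ⟨a', b', hR, rfl, rfl⟩
    exact ⟨hR, a'.isLt, b'.isLt⟩
  · rintro ⟨hR, ha, hb⟩
    exact ⟨⟨a, ha⟩, ⟨b, hb⟩, hR, rfl, rfl⟩

lemma IsSubPerm.rank_leadSub (hR : IsSubPerm r R) {i j : ℕ} (hi : i ≤ m) (hj : j ≤ n) :
    (leadSub R hi hj).rank = boxCard R.entrySupport i j := by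
  rw [← card_entrySupport_leadSub hi hj]
  exact R.rank_submatrix_eq_card_entrySupport hR.rank_eq_card_entrySupport
    (Fin.castLE_injective hi) (Fin.castLE_injective hj)

end SubPerm

/-- uniqueness of the rank profile matrix. -/
theorem stmt2 {K : Type*} [Field K] {m n : ℕ} (A R1 R2 : Matrix (Fin m) (Fin n) K)
    (h1 : IsRPM A R1) (h2 : IsRPM A R2) : R1 = R2 := by
  refine Matrix.eq_of_entrySupport_eq h1.1.1 h2.1.1 (eq_of_boxCard_eq fun i j hi hj => ?_)
  rw [← h1.1.rank_leadSub hi hj, ← h2.1.rank_leadSub hi hj, h1.2, h2.2]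
end

section
/- For any matrix A, the row rank profile of A equals the row support of its rank profile matrix, and the column rank profile of A equals the column support of its rank profile matrix. -/
open Matrix

/-!
Write `c_A(i)` for the rank of the first `i` rows of `A`. The nonzero rows of a sub-permutation
matrix `R` are distinct unit vectors, so `c_R(i)` counts the elements of `rowSupp R` below `i`,
and the rank profile condition transfers this count to `c_A`. Any `S` with
`#(S ∩ [0, i)) = c_A(i)` for all `i` is the row rank profile of `A`: a row outside `S` does not
raise `c_A`, so it lies in the span of the earlier rows and hence of the rows in `S`, which are
therefore independent; and an independent `T` has at most `c_A(i)` elements below `i`, which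
forces `S` to be lexicographically smallest. Columns follow by transposition.
-/
open Finset Module Submodule

namespace Finset

variable {α : Type*} [LinearOrder α]

theorem sort_eq_min'_cons_sort_erase (S : Finset α) (hS : S.Nonempty) :
    S.sort (· ≤ ·) = S.min' hS :: (S.erase (S.min' hS)).sort (· ≤ ·) := by
  conv_lhs => rw [← insert_erase (S.min'_mem hS)]
  exact sort_insert _ (fun b hb => S.min'_le b (mem_of_mem_erase hb)) (notMem_erase _ _)

theorem eq_or_lex_sort_of_card_filter_lt_le {S T : Finset α} (hcard : #S = #T)
    (h : ∀ v, #(T.filter (· < v)) ≤ #(S.filter (· < v))) :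
    S = T ∨ List.Lex (· < ·) (S.sort (· ≤ ·)) (T.sort (· ≤ ·)) := by
  induction S using Finset.strongInduction generalizing T with
  | H S ih =>
  rcases S.eq_empty_or_nonempty with rfl | hS
  · exact Or.inl (card_eq_zero.mp hcard.symm).symm
  have hT : T.Nonempty := card_pos.mp (hcard ▸ hS.card_pos)
  set a := S.min' hS
  have hab : a ≤ T.min' hT := by
    by_contra! hlt
    have hS0 : #(S.filter (· < a)) = 0 :=
      card_eq_zero.mpr (filter_eq_empty_iff.mpr fun x hx => not_lt.mpr (S.min'_le x hx))
    have hT0 : 0 < #(T.filter (· < a)) :=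
      card_pos.mpr ⟨_, mem_filter.mpr ⟨T.min'_mem hT, hlt⟩⟩
    have := h a
    omega
  rw [sort_eq_min'_cons_sort_erase S hS, sort_eq_min'_cons_sort_erase T hT]
  obtain hlt | heq := hab.lt_or_eq
  · exact Or.inr (List.Lex.rel hlt)
  rw [← heq]
  have haS : a ∈ S := S.min'_mem hS
  have haT : a ∈ T := heq ▸ T.min'_mem hT
  have herase : ∀ v, #((T.erase a).filter (· < v)) ≤ #((S.erase a).filter (· < v)) := by
    intro v
    have := h v
    simp only [filter_erase, card_erase_eq_ite, mem_filter, haS, haT, true_and]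
    split_ifs <;> omega
  obtain he | hlex := ih _ (erase_ssubset haS)
    (by rw [card_erase_of_mem haS, card_erase_of_mem haT, hcard]) herase
  · exact Or.inl (by rw [← insert_erase haS, ← insert_erase haT, he])
  · exact Or.inr (List.Lex.cons hlex)

end Finset

section PrefixSpan

variable (K : Type*) {V : Type*} [Field K] [AddCommGroup V] [Module K V] {m : ℕ}

def prefixSpan (v : Fin m → V) (i : ℕ) : Submodule K V :=
  span K (v '' {k | (k : ℕ) < i})

variable {K}

theorem prefixSpan_mono (v : Fin m → V) {i j : ℕ} (hij : i ≤ j) :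
    prefixSpan K v i ≤ prefixSpan K v j :=
  span_mono (Set.image_mono fun k (hk : (k : ℕ) < i) => (show (k : ℕ) < j by omega))

theorem prefixSpan_eq_span_range (v : Fin m → V) : prefixSpan K v m = span K (Set.range v) := by
  rw [prefixSpan, ← Set.image_univ]
  congr
  exact Set.eq_univ_of_forall fun k => k.isLt

theorem prefixSpan_eq_span_range_filter {v : Fin m → V} {S : Finset (Fin m)}
    (hzero : ∀ k ∉ S, v k = 0) (i : ℕ) :
    prefixSpan K v i = span K (Set.range fun k : (S.filter (·.val < i)) => v k) := by
  rw [show Set.range (fun k : (S.filter (·.val < i)) => v k) =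
    v '' ↑(S.filter (·.val < i)) by ext; simp]
  refine le_antisymm (span_le.mpr ?_) (span_mono (Set.image_mono fun k hk => (mem_filter.mp hk).2))
  rintro _ ⟨k, hk, rfl⟩
  by_cases hkS : k ∈ S
  · exact subset_span ⟨k, mem_filter.mpr ⟨hkS, hk⟩, rfl⟩
  · rw [hzero k hkS]
    exact zero_mem _

theorem finrank_prefixSpan_le_card_filter {v : Fin m → V} {S : Finset (Fin m)}
    (hzero : ∀ k ∉ S, v k = 0) (i : ℕ) :
    finrank K (prefixSpan K v i) ≤ #(S.filter (·.val < i)) := by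
  rw [prefixSpan_eq_span_range_filter hzero]
  exact (finrank_range_le_card _).trans_eq (Fintype.card_coe _)

theorem finrank_prefixSpan_of_linearIndependent {v : Fin m → V} {S : Finset (Fin m)}
    (hzero : ∀ k ∉ S, v k = 0) (hS : LinearIndependent K fun k : S => v k) (i : ℕ) :
    finrank K (prefixSpan K v i) = #(S.filter (·.val < i)) := by
  rw [prefixSpan_eq_span_range_filter hzero, finrank_span_eq_card, Fintype.card_coe]
  exact hS.comp (Set.inclusion (coe_subset.mpr (filter_subset _ S))) (Set.inclusion_injective _)

variable [FiniteDimensional K V]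

theorem card_filter_le_finrank_prefixSpan {v : Fin m → V} {T : Finset (Fin m)}
    (hT : LinearIndependent K fun k : T => v k) (i : ℕ) :
    #(T.filter (·.val < i)) ≤ finrank K (prefixSpan K v i) := by
  set Ti := T.filter (·.val < i)
  have hTi : LinearIndependent K fun k : Ti => v k :=
    hT.comp (Set.inclusion (coe_subset.mpr (filter_subset _ T))) (Set.inclusion_injective _)
  rw [← Fintype.card_coe, ← finrank_span_eq_card hTi]
  refine finrank_mono (span_le.mpr ?_)
  rintro _ ⟨k, rfl⟩
  exact subset_span ⟨k, (mem_filter.mp k.2).2, rfl⟩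

theorem mem_span_image_of_finrank_prefixSpan {v : Fin m → V} {S : Finset (Fin m)}
    (hS : ∀ i ≤ m, finrank K (prefixSpan K v i) = #(S.filter (·.val < i))) (k : Fin m) :
    v k ∈ span K (v '' S) := by
  induction k using WellFoundedLT.induction with
  | _ k ih =>
  by_cases hk : k ∈ S
  · exact subset_span ⟨k, hk, rfl⟩
  have hfilter : S.filter (·.val < k.val + 1) = S.filter (·.val < k.val) := by
    refine filter_congr fun l hl => ?_
    have : (l : ℕ) ≠ k := fun h => hk (Fin.ext h ▸ hl)
    omega
  have hstep : prefixSpan K v (k + 1) = prefixSpan K v k := by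
    refine (eq_of_le_of_finrank_eq (prefixSpan_mono v (Nat.le_succ k)) ?_).symm
    rw [hS k k.is_le', hS (k + 1) k.isLt, hfilter]
  have hmem : v k ∈ prefixSpan K v k := hstep ▸ subset_span ⟨k, Nat.lt_succ_self k, rfl⟩
  refine span_le.mpr ?_ hmem
  rintro _ ⟨l, hl, rfl⟩
  exact ih l hl

theorem linearIndependent_of_finrank_prefixSpan {v : Fin m → V} {S : Finset (Fin m)}
    (hS : ∀ i ≤ m, finrank K (prefixSpan K v i) = #(S.filter (·.val < i))) :
    LinearIndependent K fun k : S => v k := by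
  have hspan : span K (v '' S) = prefixSpan K v m := by
    refine le_antisymm (span_mono (Set.image_mono fun k _ => k.isLt)) (span_le.mpr ?_)
    rintro _ ⟨k, -, rfl⟩
    exact mem_span_image_of_finrank_prefixSpan hS k
  have hrange : Set.range (fun k : S => v k) = v '' S := by
    ext
    simp
  rw [linearIndependent_iff_card_eq_finrank_span, Set.finrank, hrange, hspan,
    hS m le_rfl, filter_true_of_mem fun k _ => k.isLt, Fintype.card_coe]

end PrefixSpan

section RankProfile

variable {K : Type*} [Field K] {m n : ℕ}

theorem rank_leadSub_eq_finrank_prefixSpan (A : Matrix (Fin m) (Fin n) K) {i : ℕ} (hi : i ≤ m) :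
    (leadSub A hi le_rfl).rank = finrank K (prefixSpan K A.row i) := by
  have h : (leadSub A hi le_rfl).row = A.row ∘ Fin.castLE hi := rfl
  rw [Matrix.rank_eq_finrank_span_row, h, Set.range_comp, Fin.range_castLE]
  rfl

theorem mem_rowSupp {R : Matrix (Fin m) (Fin n) K} {i : Fin m} :
    i ∈ rowSupp R ↔ ∃ j, R i j ≠ 0 := by
  simp [rowSupp]

theorem row_eq_zero_of_notMem_rowSupp {R : Matrix (Fin m) (Fin n) K} {i : Fin m}
    (h : i ∉ rowSupp R) : R i = 0 :=
  funext fun j => not_not.mp fun hj => h (mem_rowSupp.mpr ⟨j, hj⟩)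

theorem rank_le_card_rowSupp (R : Matrix (Fin m) (Fin n) K) : R.rank ≤ #(rowSupp R) := by
  rw [Matrix.rank_eq_finrank_span_row, ← prefixSpan_eq_span_range]
  exact (finrank_prefixSpan_le_card_filter (fun _ => row_eq_zero_of_notMem_rowSupp) m).trans
    (card_filter_le _ _)

theorem isRowRP_of_rank_leadSub_eq_card (A : Matrix (Fin m) (Fin n) K) (S : Finset (Fin m))
    (hS : ∀ i (hi : i ≤ m), (leadSub A hi le_rfl).rank = #(S.filter (·.val < i))) :
    IsRowRP A S := by
  have hfin : ∀ i ≤ m, finrank K (prefixSpan K A.row i) = #(S.filter (·.val < i)) :=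
    fun i hi => (rank_leadSub_eq_finrank_prefixSpan A hi).symm.trans (hS i hi)
  have hcard : #S = A.rank := by
    rw [Matrix.rank_eq_finrank_span_row, ← prefixSpan_eq_span_range, hfin m le_rfl,
      filter_true_of_mem fun k _ => k.isLt]
  refine ⟨hcard, linearIndependent_of_finrank_prefixSpan hfin, fun T hT hTind => ?_⟩
  refine eq_or_lex_sort_of_card_filter_lt_le (hcard.trans hT.symm) fun v => ?_
  exact (card_filter_le_finrank_prefixSpan hTind v).trans (hfin v v.is_le').le

namespace IsSubPerm

variable {r : ℕ} {R : Matrix (Fin m) (Fin n) K}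

theorem transpose (h : IsSubPerm r R) : IsSubPerm r Rᵀ := by
  obtain ⟨h01, hcard, hrank⟩ := h
  refine ⟨fun i j => h01 j i, ?_, (rank_transpose R).trans hrank⟩
  rw [← hcard, ← Set.ncard_image_of_injective _ Prod.swap_injective]
  congr 1
  ext ⟨j, i⟩
  simp

theorem injOn_fst (h : IsSubPerm r R) :
    Set.InjOn Prod.fst {p : Fin m × Fin n | R p.1 p.2 ≠ 0} := by
  classical
  obtain ⟨-, hcard, hrank⟩ := h
  -- `rank R ≤ #(rowSupp R) ≤ #(nonzero entries) = rank R`, so no row has two nonzero entries.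
  set N := univ.filter fun p : Fin m × Fin n => R p.1 p.2 ≠ 0
  have hN : {p : Fin m × Fin n | R p.1 p.2 ≠ 0} = N := by ext; simp [N]
  have himage : rowSupp R = N.image Prod.fst := by ext i; simp [mem_rowSupp, N]
  rw [hN, ← card_image_iff]
  refine le_antisymm card_image_le ?_
  rw [← himage, ← Set.ncard_coe_finset, ← hN, hcard, ← hrank]
  exact rank_le_card_rowSupp R

theorem injOn_snd (h : IsSubPerm r R) :
    Set.InjOn Prod.snd {p : Fin m × Fin n | R p.1 p.2 ≠ 0} :=
  fun _ hp _ hq hpq => Prod.swap_injective (h.transpose.injOn_fst hp hq hpq)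

theorem linearIndependent_rows (h : IsSubPerm r R) :
    LinearIndependent K fun k : rowSupp R => R k := by
  choose j hj using fun k : rowSupp R => mem_rowSupp.mp k.2
  have hrow : ∀ k : rowSupp R, R k = Pi.single (j k) 1 := by
    intro k
    funext l
    by_cases hl : l = j k
    · subst hl
      rw [Pi.single_eq_same]
      exact (h.1 _ _).resolve_left (hj k)
    · rw [Pi.single_eq_of_ne hl]
      by_contra hne
      exact hl (congrArg Prod.snd (h.injOn_fst (x₁ := (k, l)) (x₂ := (k, j k)) hne (hj k) rfl))
  have hinj : Function.Injective j := fun k l hkl =>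
    Subtype.ext <| congrArg Prod.fst <|
      h.injOn_snd (x₁ := (k, j k)) (x₂ := (l, j l)) (hj k) (hj l) hkl
  rw [show (fun k : rowSupp R => R k) = (fun c => Pi.single c (1 : K)) ∘ j from funext hrow]
  exact (Pi.linearIndependent_single_one (Fin n) K).comp j hinj

theorem finrank_prefixSpan (h : IsSubPerm r R) (i : ℕ) :
    finrank K (prefixSpan K R.row i) = #((rowSupp R).filter (·.val < i)) :=
  finrank_prefixSpan_of_linearIndependent (fun _ => row_eq_zero_of_notMem_rowSupp)
    h.linearIndependent_rows i

end IsSubPerm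

namespace IsRPM

variable {A R : Matrix (Fin m) (Fin n) K}

theorem transpose (h : IsRPM A R) : IsRPM Aᵀ Rᵀ :=
  ⟨(rank_transpose A).symm ▸ h.1.transpose, fun i j hi hj =>
    (rank_transpose _).trans ((h.2 j i hj hi).trans (rank_transpose _).symm)⟩

theorem rank_leadSub_eq_card (h : IsRPM A R) (i : ℕ) (hi : i ≤ m) :
    (leadSub A hi le_rfl).rank = #((rowSupp R).filter (·.val < i)) := by
  rw [← h.2 i n hi le_rfl, rank_leadSub_eq_finrank_prefixSpan, h.1.finrank_prefixSpan]

end IsRPM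

end RankProfile

/-- the row rank profile of A is the row support of its rank profile matrix,
and the column rank profile of A is the column support of its rank profile matrix. -/
theorem stmt5 {K : Type*} [Field K] {m n : ℕ} (A R : Matrix (Fin m) (Fin n) K)
    (hR : IsRPM A R) :
    IsRowRP A (rowSupp R) ∧ IsRowRP Aᵀ (rowSupp Rᵀ) :=
  ⟨isRowRP_of_rank_leadSub_eq_card A _ hR.rank_leadSub_eq_card,
    isRowRP_of_rank_leadSub_eq_card Aᵀ _ hR.transpose.rank_leadSub_eq_card⟩
end

section
/- If E1 is an m×(m−k) full-column-rank matrix in column echelon form (the matrix of the last m−k columns of a permutation matrix P1 with P1^T k-monotonically increasing), F1 a full-row-rank (n−k)×n matrix in row echelon form, and H an (m−k)×(n−k) matrix, then the rank profile matrix of E1·H·F1 equals E1·R_H·F1, where R_H is the rank profile matrix of H. -/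
open Matrix

namespace Stmt14Aux

variable {K : Type*} [Field K]

/-- Column-selection matrix: columns are canonical vectors `e_{φ a}`. -/
def Emb {m p : ℕ} (φ : Fin p → Fin m) : Matrix (Fin m) (Fin p) K :=
  Matrix.of fun i a => if i = φ a then (1 : K) else 0

lemma Emb_transpose_mul {m p : ℕ} {φ : Fin p → Fin m} (hφ : Function.Injective φ) :
    (Emb (K := K) φ)ᵀ * Emb (K := K) φ = 1 := by
  ext a b
  simp [Matrix.mul_apply, Emb, Matrix.one_apply, hφ.eq_iff, eq_comm]

lemma Emb_mul_apply {m p q : ℕ} {φ : Fin p → Fin m} (hφ : Function.Injective φ)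
    (M : Matrix (Fin p) (Fin q) K) (a : Fin p) (b : Fin q) :
    (Emb (K := K) φ * M) (φ a) b = M a b := by
  simp [Matrix.mul_apply, Emb, hφ.eq_iff, eq_comm]

lemma Emb_mul_apply_zero {m p q : ℕ} {φ : Fin p → Fin m} {i : Fin m}
    (h : ∀ a, i ≠ φ a) (M : Matrix (Fin p) (Fin q) K) (b : Fin q) :
    (Emb (K := K) φ * M) i b = 0 := by
  simp only [Matrix.mul_apply, Emb, Matrix.of_apply]
  apply Finset.sum_eq_zero
  intro a _
  simp [h a]

lemma mul_EmbT_apply {n p q : ℕ} {ψ : Fin q → Fin n} (hψ : Function.Injective ψ)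
    (M : Matrix (Fin p) (Fin q) K) (a : Fin p) (b : Fin q) :
    (M * (Emb (K := K) ψ)ᵀ) a (ψ b) = M a b := by
  simp [Matrix.mul_apply, Emb, hψ.eq_iff, eq_comm]

lemma mul_EmbT_apply_zero {n p q : ℕ} {ψ : Fin q → Fin n} {j : Fin n}
    (h : ∀ b, j ≠ ψ b) (M : Matrix (Fin p) (Fin q) K) (a : Fin p) :
    (M * (Emb (K := K) ψ)ᵀ) a j = 0 := by
  simp only [Matrix.mul_apply, Emb, Matrix.transpose_apply, Matrix.of_apply]
  apply Finset.sum_eq_zero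
  intro b _
  simp [h b]

lemma emb3_apply {m n p q : ℕ} {φ : Fin p → Fin m} (hφ : Function.Injective φ)
    {ψ : Fin q → Fin n} (hψ : Function.Injective ψ)
    (M : Matrix (Fin p) (Fin q) K) (a : Fin p) (b : Fin q) :
    (Emb (K := K) φ * M * (Emb (K := K) ψ)ᵀ) (φ a) (ψ b) = M a b := by
  rw [mul_EmbT_apply hψ, Emb_mul_apply hφ]

lemma emb3_zero_left {m n p q : ℕ} {φ : Fin p → Fin m} {i : Fin m}
    (h : ∀ a, i ≠ φ a) {ψ : Fin q → Fin n}
    (M : Matrix (Fin p) (Fin q) K) (j : Fin n) :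
    (Emb (K := K) φ * M * (Emb (K := K) ψ)ᵀ) i j = 0 := by
  rw [Matrix.mul_apply]
  apply Finset.sum_eq_zero
  intro b _
  rw [Emb_mul_apply_zero h, zero_mul]

lemma emb3_zero_right {m n p q : ℕ} {φ : Fin p → Fin m} {ψ : Fin q → Fin n} {j : Fin n}
    (h : ∀ b, j ≠ ψ b) (M : Matrix (Fin p) (Fin q) K) (i : Fin m) :
    (Emb (K := K) φ * M * (Emb (K := K) ψ)ᵀ) i j = 0 :=
  mul_EmbT_apply_zero h _ i

lemma rank_emb {m n p q : ℕ} {φ : Fin p → Fin m} (hφ : Function.Injective φ)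
    {ψ : Fin q → Fin n} (hψ : Function.Injective ψ)
    (M : Matrix (Fin p) (Fin q) K) :
    (Emb (K := K) φ * M * (Emb (K := K) ψ)ᵀ).rank = M.rank := by
  apply le_antisymm
  · exact le_trans (Matrix.rank_mul_le_left _ _) (Matrix.rank_mul_le_right _ _)
  · have hM : M = (Emb (K := K) φ)ᵀ * (Emb (K := K) φ * M * (Emb (K := K) ψ)ᵀ) * Emb (K := K) ψ := by
      have h1 : (Emb (K := K) φ)ᵀ * Emb (K := K) φ = 1 := Emb_transpose_mul hφ
      have h2 : (Emb (K := K) ψ)ᵀ * Emb (K := K) ψ = 1 := Emb_transpose_mul hψ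
      calc M = ((Emb (K := K) φ)ᵀ * Emb (K := K) φ) * M * ((Emb (K := K) ψ)ᵀ * Emb (K := K) ψ) := by
              rw [h1, h2, Matrix.one_mul, Matrix.mul_one]
        _ = (Emb (K := K) φ)ᵀ * (Emb (K := K) φ * M * (Emb (K := K) ψ)ᵀ) * Emb (K := K) ψ := by
              simp only [Matrix.mul_assoc]
    conv_lhs => rw [hM]
    exact le_trans (Matrix.rank_mul_le_left _ _) (Matrix.rank_mul_le_right _ _)

lemma lower_count {p m : ℕ} {φ : Fin p → Fin m} (hφ : StrictMono φ) (i : ℕ) (a : Fin p) :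
    (a : ℕ) < (Finset.univ.filter fun a => ((φ a : ℕ) < i)).card ↔ (φ a : ℕ) < i := by
  set S := Finset.univ.filter fun a : Fin p => ((φ a : ℕ) < i) with hS
  constructor
  · intro ha
    by_contra h
    have hsub : S ⊆ Finset.Iio a := by
      intro b hb
      simp only [hS, Finset.mem_filter] at hb
      rw [Finset.mem_Iio]
      by_contra hba
      have hab : (φ a : ℕ) ≤ (φ b : ℕ) := hφ.monotone (le_of_not_gt hba)
      have := hb.2
      omega
    have := Finset.card_le_card hsub
    rw [Fin.card_Iio] at this
    omega
  · intro ha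
    have hsub : Finset.Iic a ⊆ S := by
      intro b hb
      rw [Finset.mem_Iic] at hb
      simp only [hS, Finset.mem_filter, Finset.mem_univ, true_and]
      have : (φ b : ℕ) ≤ (φ a : ℕ) := hφ.monotone hb
      omega
    have := Finset.card_le_card hsub
    rw [Fin.card_Iic] at this
    omega

end Stmt14Aux

namespace Stmt14Aux

variable {K : Type*} [Field K]

lemma rank_leadSub_emb {m n p q : ℕ} {φ : Fin p → Fin m} (hφ : Function.Injective φ)
    {ψ : Fin q → Fin n} (hψ : Function.Injective ψ)
    (M : Matrix (Fin p) (Fin q) K) {i j i' j' : ℕ} (hi : i ≤ m) (hj : j ≤ n)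
    (hi' : i' ≤ p) (hj' : j' ≤ q)
    (hci : ∀ a : Fin p, (a : ℕ) < i' ↔ (φ a : ℕ) < i)
    (hcj : ∀ b : Fin q, (b : ℕ) < j' ↔ (ψ b : ℕ) < j) :
    (leadSub (Emb (K := K) φ * M * (Emb (K := K) ψ)ᵀ) hi hj).rank
      = (leadSub M hi' hj').rank := by
  set φ' : Fin i' → Fin i := fun a => ⟨(φ (Fin.castLE hi' a) : ℕ), (hci _).1 a.isLt⟩ with hφ'
  set ψ' : Fin j' → Fin j := fun b => ⟨(ψ (Fin.castLE hj' b) : ℕ), (hcj _).1 b.isLt⟩ with hψ'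
  have hφ'inj : Function.Injective φ' := by
    intro a b hab
    simp only [hφ', Fin.mk.injEq] at hab
    exact Fin.castLE_injective hi' (hφ (Fin.ext hab))
  have hψ'inj : Function.Injective ψ' := by
    intro a b hab
    simp only [hψ', Fin.mk.injEq] at hab
    exact Fin.castLE_injective hj' (hψ (Fin.ext hab))
  have key : leadSub (Emb (K := K) φ * M * (Emb (K := K) ψ)ᵀ) hi hj
      = Emb (K := K) φ' * leadSub M hi' hj' * (Emb (K := K) ψ')ᵀ := by
    ext pp qq
    simp only [leadSub, Matrix.submatrix_apply]
    by_cases hp : ∃ a' : Fin i', pp = φ' a'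
    · obtain ⟨a', rfl⟩ := hp
      by_cases hq : ∃ b' : Fin j', qq = ψ' b'
      · obtain ⟨b', rfl⟩ := hq
        rw [show Fin.castLE hi (φ' a') = φ (Fin.castLE hi' a') from Fin.ext rfl,
            show Fin.castLE hj (ψ' b') = ψ (Fin.castLE hj' b') from Fin.ext rfl,
            emb3_apply hφ hψ, emb3_apply hφ'inj hψ'inj]
        rfl
      · push_neg at hq
        have hq2 : ∀ b : Fin q, Fin.castLE hj qq ≠ ψ b := by
          intro b hb
          have hlt : (b : ℕ) < j' := (hcj b).2 (by rw [← hb]; exact qq.isLt)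
          apply hq ⟨(b : ℕ), hlt⟩
          apply Fin.ext
          show (qq : ℕ) = (ψ (Fin.castLE hj' ⟨(b : ℕ), hlt⟩) : ℕ)
          rw [show Fin.castLE hj' ⟨(b : ℕ), hlt⟩ = b from Fin.ext rfl]
          exact congrArg Fin.val hb
        rw [emb3_zero_right hq2, emb3_zero_right hq]
    · push_neg at hp
      have hp2 : ∀ a : Fin p, Fin.castLE hi pp ≠ φ a := by
        intro a hb
        have hlt : (a : ℕ) < i' := (hci a).2 (by rw [← hb]; exact pp.isLt)
        apply hp ⟨(a : ℕ), hlt⟩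
        apply Fin.ext
        show (pp : ℕ) = (φ (Fin.castLE hi' ⟨(a : ℕ), hlt⟩) : ℕ)
        rw [show Fin.castLE hi' ⟨(a : ℕ), hlt⟩ = a from Fin.ext rfl]
        exact congrArg Fin.val hb
      rw [emb3_zero_left hp2, emb3_zero_left hp]
  rw [key, rank_emb hφ'inj hψ'inj]

end Stmt14Aux

/-- if E1 is in column echelon form (columns are canonical vectors with
strictly increasing row indices), F1 in row echelon form, then the rank profile matrix
of E1·H·F1 is E1·R_H·F1. -/
theorem stmt14 {K : Type*} [Field K] {m n k : ℕ} (hkm : k ≤ m) (hkn : k ≤ n)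
    (φ : Fin (m - k) → Fin m) (hφ : StrictMono φ)
    (ψ : Fin (n - k) → Fin n) (hψ : StrictMono ψ)
    (E1 : Matrix (Fin m) (Fin (m - k)) K)
    (hE1 : E1 = Matrix.of fun i a => if i = φ a then (1 : K) else 0)
    (F1 : Matrix (Fin (n - k)) (Fin n) K)
    (hF1 : F1 = Matrix.of fun b j => if j = ψ b then (1 : K) else 0)
    (H RH : Matrix (Fin (m - k)) (Fin (n - k)) K) (hRH : IsRPM H RH) :
    IsRPM (E1 * H * F1) (E1 * RH * F1) := by
  have hE : E1 = Stmt14Aux.Emb (K := K) φ := hE1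
  have hF : F1 = (Stmt14Aux.Emb (K := K) ψ)ᵀ := by
    rw [hF1]; ext b j; rfl
  subst hE hF
  open Stmt14Aux in
  obtain ⟨⟨h01, hncard, hrank⟩, hlead⟩ := hRH
  have hrkH : (Stmt14Aux.Emb (K := K) φ * H * (Stmt14Aux.Emb (K := K) ψ)ᵀ).rank = H.rank :=
    Stmt14Aux.rank_emb hφ.injective hψ.injective H
  have hrkRH : (Stmt14Aux.Emb (K := K) φ * RH * (Stmt14Aux.Emb (K := K) ψ)ᵀ).rank = RH.rank :=
    Stmt14Aux.rank_emb hφ.injective hψ.injective RH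
  constructor
  · refine ⟨?_, ?_, ?_⟩
    · intro i j
      by_cases hp : ∃ a, i = φ a
      · obtain ⟨a, rfl⟩ := hp
        by_cases hq : ∃ b, j = ψ b
        · obtain ⟨b, rfl⟩ := hq
          rw [Stmt14Aux.emb3_apply hφ.injective hψ.injective]
          exact h01 a b
        · push_neg at hq
          exact Or.inl (Stmt14Aux.emb3_zero_right hq _ _)
      · push_neg at hp
        exact Or.inl (Stmt14Aux.emb3_zero_left hp _ _)
    · have hset : {p : Fin m × Fin n |
          (Stmt14Aux.Emb (K := K) φ * RH * (Stmt14Aux.Emb (K := K) ψ)ᵀ) p.1 p.2 ≠ 0}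
          = (Prod.map φ ψ) '' {p : Fin (m - k) × Fin (n - k) | RH p.1 p.2 ≠ 0} := by
        ext ⟨ii, jj⟩
        simp only [Set.mem_setOf_eq, Set.mem_image, Prod.exists, Prod.map, Prod.mk.injEq]
        constructor
        · intro hne
          rcases Classical.em (∃ a, ii = φ a) with ⟨a, rfl⟩ | hp
          · rcases Classical.em (∃ b, jj = ψ b) with ⟨b, rfl⟩ | hq
            · refine ⟨a, b, ?_, rfl, rfl⟩
              rwa [Stmt14Aux.emb3_apply hφ.injective hψ.injective] at hne
            · exact absurd (Stmt14Aux.emb3_zero_right (fun b hb => hq ⟨b, hb⟩) RH (φ a)) hne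
          · exact absurd (Stmt14Aux.emb3_zero_left (fun a ha => hp ⟨a, ha⟩) RH jj) hne
        · rintro ⟨a, b, hab, rfl, rfl⟩
          rw [Stmt14Aux.emb3_apply hφ.injective hψ.injective]
          exact hab
      rw [hset, Set.ncard_image_of_injective _ (hφ.injective.prodMap hψ.injective), hrkH]
      exact hncard
    · rw [hrkRH, hrkH, hrank]
  · intro i j hi hj
    have hi' : (Finset.univ.filter fun a : Fin (m - k) => ((φ a : ℕ) < i)).card ≤ m - k :=
      (Finset.card_filter_le _ _).trans (by simp)
    have hj' : (Finset.univ.filter fun b : Fin (n - k) => ((ψ b : ℕ) < j)).card ≤ n - k :=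
      (Finset.card_filter_le _ _).trans (by simp)
    rw [Stmt14Aux.rank_leadSub_emb hφ.injective hψ.injective RH hi hj hi' hj'
          (Stmt14Aux.lower_count hφ i) (Stmt14Aux.lower_count hψ j),
        Stmt14Aux.rank_leadSub_emb hφ.injective hψ.injective H hi hj hi' hj'
          (Stmt14Aux.lower_count hφ i) (Stmt14Aux.lower_count hψ j)]
    exact hlead _ _ hi' hj'
end

section
/- Let A be an m×n matrix with full row rank m over a field. If A = P·L·U with P a permutation matrix, L m×m unit lower triangular, and U m×n upper triangular with nonzero diagonal, and the pivoting matrix P·[I_m,0] equals the rank profile matrix of A, then L and U are uniquely determined by P; hence the decomposition A = R_A·L·U is unique. -/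
open Matrix

/-- for a full row rank matrix, the factors L and U of a PLU decomposition
whose pivoting matrix P·[I_m,0] is the rank profile matrix are uniquely determined by P. -/
theorem stmt18 {K : Type*} [Field K] {m n : ℕ} (hmn : m ≤ n)
    (A : Matrix (Fin m) (Fin n) K) (hr : A.rank = m)
    (σ : Equiv.Perm (Fin m))
    (hRPM : IsRPM A (σ.permMatrix K * Jb K m n m))
    (L L' : Matrix (Fin m) (Fin m) K) (U U' : Matrix (Fin m) (Fin n) K)
    (hLlow : ∀ a b : Fin m, a < b → L a b = 0) (hLdiag : ∀ a, L a a = 1)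
    (hL'low : ∀ a b : Fin m, a < b → L' a b = 0) (hL'diag : ∀ a, L' a a = 1)
    (hUup : ∀ (a : Fin m) (b : Fin n), (b : ℕ) < (a : ℕ) → U a b = 0)
    (hUdiag : ∀ a : Fin m, U a (Fin.castLE hmn a) ≠ 0)
    (hU'up : ∀ (a : Fin m) (b : Fin n), (b : ℕ) < (a : ℕ) → U' a b = 0)
    (hU'diag : ∀ a : Fin m, U' a (Fin.castLE hmn a) ≠ 0)
    (hA : A = σ.permMatrix K * L * U) (hA' : A = σ.permMatrix K * L' * U') :
    L = L' ∧ U = U' := by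
  -- Cancel the permutation matrix to get L * U = L' * U'
  have h1 : σ.permMatrix K * (L * U) = σ.permMatrix K * (L' * U') := by
    rw [← Matrix.mul_assoc, ← Matrix.mul_assoc, ← hA, ← hA']
  rw [Equiv.Perm.permMatrix, PEquiv.toMatrix_toPEquiv_mul, PEquiv.toMatrix_toPEquiv_mul] at h1
  have hE : L * U = L' * U' := by
    ext i j
    have h2 := congrFun (congrFun h1 (σ.symm i)) j
    simpa using h2
  -- Main strong induction on rows
  have key : ∀ (N : ℕ) (a : Fin m), (a : ℕ) = N →
      (∀ k, L a k = L' a k) ∧ (∀ b, U a b = U' a b) := by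
    intro N
    induction N using Nat.strong_induction_on with
    | _ N ih =>
      intro a haN
      have IH : ∀ j : Fin m, j < a → (∀ k, L j k = L' j k) ∧ (∀ b, U j b = U' j b) :=
        fun j hj => ih (j : ℕ) (haN ▸ hj) j rfl
      -- First: row a of L equals row a of L', by inner strong induction on the column
      have hLrowAux : ∀ (M : ℕ) (k : Fin m), (k : ℕ) = M → L a k = L' a k := by
        intro M
        induction M using Nat.strong_induction_on with
        | _ M ihk =>
          intro k hkM
          rcases lt_trichotomy k a with hka | rfl | hak
          · set c : Fin n := Fin.castLE hmn k with hc
            have hcval : (c : ℕ) = (k : ℕ) := rfl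
            have heq : (L * U) a c = (L' * U') a c := by rw [hE]
            rw [Matrix.mul_apply, Matrix.mul_apply] at heq
            have hterm : ∀ j : Fin m, j ≠ k → L a j * U j c = L' a j * U' j c := by
              intro j hj
              rcases lt_or_gt_of_ne hj with hjk | hjk
              · rw [ihk (j : ℕ) (hkM ▸ hjk) j rfl, (IH j (hjk.trans hka)).2 c]
              · rw [hUup j c (by rw [hcval]; exact_mod_cast hjk),
                  hU'up j c (by rw [hcval]; exact_mod_cast hjk), mul_zero, mul_zero]
            rw [← Finset.add_sum_erase _ _ (Finset.mem_univ k),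
              ← Finset.add_sum_erase _ _ (Finset.mem_univ k)] at heq
            have hsum : (∑ j ∈ Finset.univ.erase k, L a j * U j c) =
                ∑ j ∈ Finset.univ.erase k, L' a j * U' j c :=
              Finset.sum_congr rfl fun j hj => hterm j (Finset.ne_of_mem_erase hj)
            rw [hsum] at heq
            have heq2 : L a k * U k c = L' a k * U' k c := add_right_cancel heq
            rw [(IH k hka).2 c] at heq2
            exact mul_right_cancel₀ (hU'diag k) heq2
          · rw [hLdiag, hL'diag]
          · rw [hLlow a k hak, hL'low a k hak]
      have hLrow : ∀ k, L a k = L' a k := fun k => hLrowAux (k : ℕ) k rfl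
      refine ⟨hLrow, fun b => ?_⟩
      -- Now: row a of U equals row a of U'
      have heq : (L * U) a b = (L' * U') a b := by rw [hE]
      rw [Matrix.mul_apply, Matrix.mul_apply] at heq
      have hterm : ∀ j : Fin m, j ≠ a → L a j * U j b = L' a j * U' j b := by
        intro j hj
        rcases lt_or_gt_of_ne hj with hja | hja
        · rw [hLrow j, (IH j hja).2 b]
        · rw [hLlow a j hja, hL'low a j hja, zero_mul, zero_mul]
      rw [← Finset.add_sum_erase _ _ (Finset.mem_univ a),
        ← Finset.add_sum_erase _ _ (Finset.mem_univ a)] at heq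
      have hsum : (∑ j ∈ Finset.univ.erase a, L a j * U j b) =
          ∑ j ∈ Finset.univ.erase a, L' a j * U' j b :=
        Finset.sum_congr rfl fun j hj => hterm j (Finset.ne_of_mem_erase hj)
      rw [hsum] at heq
      have heq2 : L a a * U a b = L' a a * U' a b := add_right_cancel heq
      rwa [hLdiag, hL'diag, one_mul, one_mul] at heq2
  constructor
  · ext i j; exact (key (i : ℕ) i rfl).1 j
  · ext i j; exact (key (i : ℕ) i rfl).2 j
end
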